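/- Let s ∈ (0,1/2), j ∈ ℕ and k ∈ ℕ, and define f_j(y) = ∫_{1}^{∞} e^{−y(σ−1)} [(σ²−1)^s/σ]^{j+1} dσ/σ for y > 0. Then lim_{y→∞} y^{k+1+s(j+1)} · f_j^{(k)}(y) = (−1)^k 2^{s(j+1)} ∫_{0}^{∞} e^{−w} w^{k+s(j+1)} dw = (−1)^k 2^{s(j+1)} Γ(k + s(j+1) + 1), where f_j^{(k)} denotes the k-th derivative and Γ is the Gamma function. -/

import Mathlib

/-!
The substitution `σ = 1 + t` turns `f_j` into a Laplace transform `∫₀^∞ e^{-yt} W(t) dt` of a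
weight `W` bounded by `1` (this is where `s ≤ 1/2` enters), so differentiating under the integral
gives `f_j^{(k)}(y) = (-1)^k ∫₀^∞ e^{-yt} t^k W(t) dt`. Near `t = 0` the weight behaves like
`(2t)^{s(j+1)}`: `t^k W(t) = t^{k+s(j+1)} h(t)` with `h` bounded and `h(0+) = 2^{s(j+1)}`.
Watson's lemma (rescale `t = w / y`, then dominated convergence) yields the limit
`2^{s(j+1)} Γ(k + s(j+1) + 1)`, and `Γ` is given by Euler's integral.
-/

open Filter

/-- The function `f_j(y) = ∫_1^∞ e^{-y(σ-1)} [(σ²-1)^s/σ]^{j+1} dσ/σ`. -/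
noncomputable def fAux (s : ℝ) (j : ℕ) (y : ℝ) : ℝ :=
  ∫ σ in Set.Ioi (1 : ℝ), Real.exp (-(y * (σ - 1))) * ((σ ^ 2 - 1) ^ s / σ) ^ (j + 1) / σ

open MeasureTheory Set Real Topology

lemma integral_comp_add_right_Ioi (f : ℝ → ℝ) (a d : ℝ) :
    ∫ x in Ioi a, f (x + d) = ∫ x in Ioi (a + d), f x := by
  simpa using (measurePreserving_add_right volume d).setIntegral_preimage_emb
    (measurableEmbedding_addRight d) f (Ioi (a + d))

-- Up to the sign `(-1)^m`, the `m`-th derivative of the Laplace transform of `F`.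
noncomputable def laplaceMoment (F : ℝ → ℝ) (m : ℕ) (y : ℝ) : ℝ :=
  ∫ t in Ioi 0, exp (-(y * t)) * t ^ m * F t

lemma integrableOn_exp_neg_mul_pow {y : ℝ} (hy : 0 < y) (m : ℕ) :
    IntegrableOn (fun t => exp (-(y * t)) * t ^ m) (Ioi 0) := by
  have hm : (-1 : ℝ) < m := by linarith [m.cast_nonneg (α := ℝ)]
  refine (integrableOn_rpow_mul_exp_neg_mul_rpow hm one_pos hy).congr_fun (fun t _ => ?_)
    measurableSet_Ioi
  dsimp only
  rw [rpow_natCast, rpow_one, neg_mul, mul_comm]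

section Bounded

variable {F : ℝ → ℝ} {C : ℝ}

lemma integrableOn_laplaceMoment (hF : Measurable F) (hFC : ∀ t ∈ Ioi 0, |F t| ≤ C)
    {y : ℝ} (hy : 0 < y) (m : ℕ) :
    IntegrableOn (fun t => exp (-(y * t)) * t ^ m * F t) (Ioi 0) := by
  refine (integrableOn_exp_neg_mul_pow hy m).mul_bdd (c := C) hF.aestronglyMeasurable ?_
  exact (ae_restrict_iff' measurableSet_Ioi).mpr
    (.of_forall fun t ht => (Real.norm_eq_abs _).trans_le (hFC t ht))

lemma hasDerivAt_laplaceMoment (hF : Measurable F) (hFC : ∀ t ∈ Ioi 0, |F t| ≤ C)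
    {y : ℝ} (hy : 0 < y) (m : ℕ) :
    HasDerivAt (laplaceMoment F m) (-laplaceMoment F (m + 1) y) y := by
  have hmeas : ∀ x n, AEStronglyMeasurable (fun t => exp (-(x * t)) * t ^ n * F t)
      (volume.restrict (Ioi 0)) := fun x n => by fun_prop
  have hderiv := hasDerivAt_integral_of_dominated_loc_of_deriv_le
    (F := fun x t => exp (-(x * t)) * t ^ m * F t)
    (F' := fun x t => -(exp (-(x * t)) * t ^ (m + 1) * F t))
    (bound := fun t => exp (-(y / 2 * t)) * t ^ (m + 1) * C)
    (μ := volume.restrict (Ioi 0)) (Metric.ball_mem_nhds y (half_pos hy))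
    (.of_forall fun x => hmeas x m) (integrableOn_laplaceMoment hF hFC hy m)
    (hmeas y (m + 1)).neg ?_ ((integrableOn_exp_neg_mul_pow (half_pos hy) (m + 1)).mul_const C) ?_
  · unfold laplaceMoment
    simpa only [integral_neg] using hderiv.2
  · refine (ae_restrict_iff' measurableSet_Ioi).mpr (.of_forall fun t ht x hx => ?_)
    have ht : 0 < t := ht
    have hx : y / 2 < x := by
      have := (abs_lt.mp (mem_ball_iff_norm.mp hx)).1
      linarith
    rw [norm_neg, norm_mul, norm_mul, Real.norm_of_nonneg (exp_pos _).le,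
      Real.norm_of_nonneg (by positivity), Real.norm_eq_abs]
    gcongr
    exact hFC t ht
  · refine (ae_restrict_iff' measurableSet_Ioi).mpr (.of_forall fun t _ x _ => ?_)
    have hexp : HasDerivAt (fun x => exp (-(x * t))) (-(t * exp (-(x * t)))) x := by
      simpa [mul_comm] using ((hasDerivAt_mul_const t).neg).exp
    exact ((hexp.mul_const (t ^ m)).mul_const (F t)).congr_deriv (by ring)

lemma iteratedDeriv_laplaceMoment (hF : Measurable F) (hFC : ∀ t ∈ Ioi 0, |F t| ≤ C)
    (m k : ℕ) {y : ℝ} (hy : 0 < y) :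
    iteratedDeriv k (laplaceMoment F m) y = (-1) ^ k * laplaceMoment F (m + k) y := by
  induction k generalizing y with
  | zero => simp
  | succ k ih =>
    have hloc : iteratedDeriv k (laplaceMoment F m) =ᶠ[𝓝 y]
        fun z => (-1) ^ k * laplaceMoment F (m + k) z :=
      eventually_of_mem (isOpen_Ioi.mem_nhds hy) fun z hz => ih hz
    rw [iteratedDeriv_succ, hloc.deriv_eq,
      ((hasDerivAt_laplaceMoment hF hFC hy (m + k)).const_mul _).deriv, ← add_assoc]
    ring

end Bounded

lemma rpow_mul_integral_exp_neg_mul_eq (h : ℝ → ℝ) {y : ℝ} (hy : 0 < y) (β : ℝ) :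
    y ^ (β + 1) * ∫ t in Ioi 0, exp (-(y * t)) * t ^ β * h t
      = ∫ w in Ioi 0, exp (-w) * w ^ β * h (w / y) := by
  have hscale := integral_comp_mul_left_Ioi (fun t => exp (-(y * t)) * t ^ β * h t) 0
    (inv_pos.mpr hy)
  have hpt : ∀ w ∈ Ioi (0 : ℝ), exp (-(y * (y⁻¹ * w))) * (y⁻¹ * w) ^ β * h (y⁻¹ * w)
      = y ^ (-β) * (exp (-w) * w ^ β * h (w / y)) := fun w hw => by
    rw [mul_rpow (inv_nonneg.mpr hy.le) (le_of_lt hw), inv_rpow hy.le, ← rpow_neg hy.le,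
      mul_inv_cancel_left₀ hy.ne', inv_mul_eq_div]
    ring
  simp only [mul_zero, inv_inv, smul_eq_mul] at hscale
  rw [setIntegral_congr_fun measurableSet_Ioi hpt, integral_const_mul] at hscale
  rw [rpow_add_one hy.ne', mul_assoc, ← hscale, ← mul_assoc, ← rpow_add hy, add_neg_cancel,
    rpow_zero, one_mul]

-- Watson's lemma, for a bounded profile `h`.
theorem tendsto_rpow_mul_integral_exp_neg_mul {h : ℝ → ℝ} {C L β : ℝ} (hβ : -1 < β)
    (hh : Measurable h) (hhC : ∀ t ∈ Ioi 0, |h t| ≤ C) (hL : Tendsto h (𝓝[>] 0) (𝓝 L)) :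
    Tendsto (fun y => y ^ (β + 1) * ∫ t in Ioi 0, exp (-(y * t)) * t ^ β * h t) atTop
      (𝓝 (L * Gamma (β + 1))) := by
  have hGamma : L * Gamma (β + 1) = ∫ w in Ioi 0, exp (-w) * w ^ β * L := by
    rw [Gamma_eq_integral (by linarith), add_sub_cancel_right, integral_mul_const, mul_comm]
  have hint : IntegrableOn (fun w => exp (-w) * w ^ β) (Ioi 0) := by
    simpa only [add_sub_cancel_right] using GammaIntegral_convergent (s := β + 1) (by linarith)
  rw [hGamma]
  refine (tendsto_integral_filter_of_dominated_convergence (fun w => exp (-w) * w ^ β * C)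
    (.of_forall fun y => (by fun_prop : Measurable fun w => exp (-w) * w ^ β * h (w / y))
      |>.aestronglyMeasurable) ?_ (hint.mul_const C) ?_).congr' ?_
  · filter_upwards [eventually_gt_atTop 0] with y hy
    refine (ae_restrict_iff' measurableSet_Ioi).mpr (.of_forall fun w hw => ?_)
    have hw : 0 < w := hw
    rw [norm_mul, Real.norm_of_nonneg (by positivity), Real.norm_eq_abs]
    gcongr
    exact hhC _ (div_pos hw hy)
  · refine (ae_restrict_iff' measurableSet_Ioi).mpr (.of_forall fun w hw => ?_)
    have hw : 0 < w := hw
    have hscaled : Tendsto (fun y => w / y) atTop (𝓝[>] 0) :=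
      tendsto_nhdsWithin_iff.mpr ⟨tendsto_const_nhds.div_atTop tendsto_id,
        (eventually_gt_atTop 0).mono fun y hy => div_pos hw hy⟩
    exact (hL.comp hscaled).const_mul _
  · filter_upwards [eventually_gt_atTop 0] with y hy
    exact (rpow_mul_integral_exp_neg_mul_eq h hy β).symm

-- The integrand weight of `fAux` at `σ = 1 + t`.
noncomputable def fWeight (s : ℝ) (j : ℕ) (t : ℝ) : ℝ :=
  (((t + 1) ^ 2 - 1) ^ s / (t + 1)) ^ (j + 1) / (t + 1)

noncomputable def fProfile (s : ℝ) (j : ℕ) (t : ℝ) : ℝ :=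
  (t + 2) ^ (s * ((j : ℝ) + 1)) / (t + 1) ^ (j + 2)

lemma fAux_eq_laplaceMoment (s : ℝ) (j : ℕ) : fAux s j = laplaceMoment (fWeight s j) 0 := by
  funext y
  have hshift := integral_comp_add_right_Ioi
    (fun σ => exp (-(y * (σ - 1))) * ((σ ^ 2 - 1) ^ s / σ) ^ (j + 1) / σ) 0 1
  rw [zero_add] at hshift
  rw [fAux, ← hshift, laplaceMoment]
  simp only [add_sub_cancel_right, pow_zero, mul_one, fWeight, mul_div_assoc]

lemma measurable_fWeight (s : ℝ) (j : ℕ) : Measurable (fWeight s j) := by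
  unfold fWeight
  fun_prop

lemma abs_fWeight_le_one {s : ℝ} (hs0 : 0 ≤ s) (hs : s ≤ 1 / 2) (j : ℕ) {t : ℝ}
    (ht : 0 < t) : |fWeight s j t| ≤ 1 := by
  have hu : 1 < t + 1 := by linarith
  have hbase : 0 ≤ (t + 1) ^ 2 - 1 := by nlinarith
  have hnum : ((t + 1) ^ 2 - 1) ^ s ≤ t + 1 :=
    calc ((t + 1) ^ 2 - 1) ^ s ≤ ((t + 1) ^ 2) ^ s := by gcongr; linarith
      _ = (t + 1) ^ (2 * s) := by rw [← rpow_natCast, ← rpow_mul (by linarith)]; norm_num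
      _ ≤ (t + 1) ^ (1 : ℝ) := rpow_le_rpow_of_exponent_le hu.le (by linarith)
      _ = t + 1 := rpow_one _
  have hratio : ((t + 1) ^ 2 - 1) ^ s / (t + 1) ≤ 1 := (div_le_one (by linarith)).mpr hnum
  have hW0 : 0 ≤ fWeight s j t := by unfold fWeight; positivity
  rw [abs_of_nonneg hW0, fWeight, div_le_one (by linarith)]
  exact (pow_le_one₀ (by positivity) hratio).trans hu.le

lemma measurable_fProfile (s : ℝ) (j : ℕ) : Measurable (fProfile s j) := by
  unfold fProfile
  fun_prop

lemma abs_fProfile_le {s : ℝ} (hs0 : 0 ≤ s) (hs1 : s ≤ 1) (j : ℕ) {t : ℝ} (ht : 0 < t) :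
    |fProfile s j t| ≤ 2 ^ (s * ((j : ℝ) + 1)) := by
  set q := s * ((j : ℝ) + 1)
  have hq0 : 0 ≤ q := by positivity
  have hq : q ≤ ((j + 2 : ℕ) : ℝ) := by push_cast; nlinarith
  have hnum : (t + 2) ^ q ≤ 2 ^ q * (t + 1) ^ (j + 2) :=
    calc (t + 2) ^ q ≤ (2 * (t + 1)) ^ q := by gcongr; linarith
      _ = 2 ^ q * (t + 1) ^ q := mul_rpow zero_le_two (by linarith)
      _ ≤ 2 ^ q * (t + 1) ^ (((j + 2 : ℕ) : ℝ)) := by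
          gcongr
          linarith
      _ = 2 ^ q * (t + 1) ^ (j + 2) := by rw [rpow_natCast]
  rw [abs_of_nonneg (by unfold fProfile; positivity), fProfile, div_le_iff₀ (by positivity)]
  exact hnum

lemma tendsto_fProfile (s : ℝ) (j : ℕ) :
    Tendsto (fProfile s j) (𝓝[>] 0) (𝓝 (2 ^ (s * ((j : ℝ) + 1)))) := by
  have hcont : ContinuousAt (fProfile s j) 0 := by
    unfold fProfile
    exact (continuousAt_id.add continuousAt_const).rpow_const (Or.inl (by norm_num)) |>.div
      (by fun_prop) (by norm_num)
  simpa [fProfile] using hcont.tendsto.mono_left nhdsWithin_le_nhds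

lemma pow_mul_fWeight (s : ℝ) (j k : ℕ) {t : ℝ} (ht : 0 < t) :
    t ^ k * fWeight s j t = t ^ ((k : ℝ) + s * ((j : ℝ) + 1)) * fProfile s j t := by
  have hfactor : (t + 1) ^ 2 - 1 = t * (t + 2) := by ring
  have hpow (x : ℝ) (hx : 0 ≤ x) : (x ^ s) ^ (j + 1) = x ^ (s * ((j : ℝ) + 1)) := by
    rw [← rpow_mul_natCast hx, Nat.cast_add_one]
  rw [fWeight, fProfile, hfactor, mul_rpow ht.le (by linarith), div_pow, mul_pow, hpow t ht.le,
    hpow (t + 2) (by linarith), rpow_add ht, rpow_natCast]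
  field_simp
  ring

/-- For `s ∈ (0,1/2)`, `j, k ∈ ℕ`:
`lim_{y→∞} y^{k+1+s(j+1)} f_j^{(k)}(y) = (-1)^k 2^{s(j+1)} ∫_0^∞ e^{-w} w^{k+s(j+1)} dw
  = (-1)^k 2^{s(j+1)} Γ(k+s(j+1)+1)`. -/
theorem stmt_8 (s : ℝ) (j k : ℕ) (hs0 : 0 < s) (hs2 : s < 1 / 2) :
    Tendsto
      (fun y : ℝ => y ^ ((k : ℝ) + 1 + s * ((j : ℝ) + 1)) * iteratedDeriv k (fAux s j) y)
      atTop
      (nhds ((-1 : ℝ) ^ k * (2 : ℝ) ^ (s * ((j : ℝ) + 1)) *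
        ∫ w in Set.Ioi (0 : ℝ), Real.exp (-w) * w ^ ((k : ℝ) + s * ((j : ℝ) + 1)))) ∧
    (∫ w in Set.Ioi (0 : ℝ), Real.exp (-w) * w ^ ((k : ℝ) + s * ((j : ℝ) + 1)))
      = Real.Gamma ((k : ℝ) + s * ((j : ℝ) + 1) + 1) := by
  set β := (k : ℝ) + s * ((j : ℝ) + 1)
  have hβ : 0 < β := by positivity
  have hGamma : ∫ w in Ioi 0, exp (-w) * w ^ β = Gamma (β + 1) := by
    rw [Gamma_eq_integral (by linarith), add_sub_cancel_right]
  refine ⟨?_, hGamma⟩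
  have hWatson := tendsto_rpow_mul_integral_exp_neg_mul (β := β) (by linarith)
    (measurable_fProfile s j) (fun _ ht => abs_fProfile_le hs0.le (by linarith) j ht)
    (tendsto_fProfile s j)
  rw [hGamma, mul_assoc]
  refine (hWatson.const_mul _).congr' ?_
  filter_upwards [eventually_gt_atTop 0] with y hy
  rw [fAux_eq_laplaceMoment, iteratedDeriv_laplaceMoment (measurable_fWeight s j)
    (fun _ ht => abs_fWeight_le_one hs0.le hs2.le j ht) 0 k hy, zero_add, laplaceMoment,
    show (k : ℝ) + 1 + s * ((j : ℝ) + 1) = β + 1 by ring]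
  have hmoment : ∫ t in Ioi 0, exp (-(y * t)) * t ^ k * fWeight s j t
      = ∫ t in Ioi 0, exp (-(y * t)) * t ^ β * fProfile s j t :=
    setIntegral_congr_fun measurableSet_Ioi fun t ht => by
      rw [mul_assoc, pow_mul_fWeight s j k ht, ← mul_assoc]
  rw [hmoment]
  ring
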